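/- Consider the TRS R over the signature with constant 0, unary symbols s, − and fac, and binary symbols mul and add, consisting of the rules: fac(0) → s(0); fac(s(x)) → mul(s(x), fac(x)); fac(−(x)) → mul(−(x), fac(−(s(x)))); mul(x,0) → 0; mul(0,y) → 0; mul(x,s(y)) → add(mul(x,y), x); mul(s(x),−(y)) → −(mul(s(x),y)); mul(−(x),−(y)) → mul(x,y); add(x,0) → x; add(0,y) → y; add(x,s(y)) → s(add(x,y)); add(s(x),−(s(y))) → add(x,−(y)); add(s(x),−(0)) → s(x); add(−(x),−(y)) → −(add(x,y)). Then R is terminating on the set T = {fac(sⁿ(0)) : n ∈ ℕ}: no term fac(sⁿ(0)) admits an infinite →_R-rewrite sequence. -/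

import Mathlib

namespace Fac

/-- Ground terms over the signature with constant `0`, unary `s`, `-`, `fac`
and binary `mul`, `add`. -/
inductive FT : Type
  | zero : FT
  | s : FT → FT
  | neg : FT → FT
  | fac : FT → FT
  | mul : FT → FT → FT
  | add : FT → FT → FT

open FT

/-- The one-step rewrite relation of the factorial TRS (root steps for all
ground instances of the rules, closed under contexts). -/
inductive FRw : FT → FT → Prop
  | fac0 : FRw (fac zero) (s zero)
  | facs (x : FT) : FRw (fac (s x)) (mul (s x) (fac x))
  | facm (x : FT) : FRw (fac (neg x)) (mul (neg x) (fac (neg (s x))))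
  | mul0r (x : FT) : FRw (mul x zero) zero
  | mul0l (y : FT) : FRw (mul zero y) zero
  | muls (x y : FT) : FRw (mul x (s y)) (add (mul x y) x)
  | mulsm (x y : FT) : FRw (mul (s x) (neg y)) (neg (mul (s x) y))
  | mulmm (x y : FT) : FRw (mul (neg x) (neg y)) (mul x y)
  | add0r (x : FT) : FRw (add x zero) x
  | add0l (y : FT) : FRw (add zero y) y
  | adds (x y : FT) : FRw (add x (s y)) (s (add x y))
  | addsm (x y : FT) : FRw (add (s x) (neg (s y))) (add x (neg y))
  | addsm0 (x : FT) : FRw (add (s x) (neg zero)) (s x)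
  | addmm (x y : FT) : FRw (add (neg x) (neg y)) (neg (add x y))
  | s_c {u v : FT} : FRw u v → FRw (s u) (s v)
  | neg_c {u v : FT} : FRw u v → FRw (neg u) (neg v)
  | fac_c {u v : FT} : FRw u v → FRw (fac u) (fac v)
  | mul_l {u v : FT} (w : FT) : FRw u v → FRw (mul u w) (mul v w)
  | mul_r (w : FT) {u v : FT} : FRw u v → FRw (mul w u) (mul w v)
  | add_l {u v : FT} (w : FT) : FRw u v → FRw (add u w) (add v w)
  | add_r (w : FT) {u v : FT} : FRw u v → FRw (add w u) (add w v)

/-- `sⁿ(0)`. -/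
def sn : ℕ → FT
  | 0 => zero
  | n + 1 => s (sn n)

/-!
Negation-free terms are closed under rewriting, since every rule whose right-hand side
contains `−` has a `−` on its left-hand side as well. On negation-free terms, interpret
`0 ↦ 2`, `s x ↦ x + 1`, `mul x y ↦ 3xy`, `add x y ↦ x + 2y` and `fac` by `F` with
`F 0 = 4`, `F (n + 1) = 3 (n + 1) F n + 1`. All values are `≥ 2`, every interpretation is
strictly monotone there, and every rule strictly decreases the value; the `+ 1` in `F` is
exactly what makes `fac (s x) → mul (s x) (fac x)` decrease. So a rewrite sequence from
`fac (sⁿ 0)` yields a strictly decreasing sequence of natural numbers.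
-/

theorem not_exists_chain_of_invariant_of_measure_lt {α β : Type*} [Preorder β]
    [WellFoundedLT β] {r : α → α → Prop} {P : α → Prop} (m : α → β)
    (hP : ∀ {a b}, r a b → P a → P b) (hm : ∀ {a b}, r a b → P a → m b < m a)
    {a : α} (ha : P a) : ¬ ∃ f : ℕ → α, f 0 = a ∧ ∀ k, r (f k) (f (k + 1)) := by
  rintro ⟨f, rfl, hf⟩
  have hPf : ∀ k, P (f k) := fun k => Nat.rec ha (fun k ih => hP (hf k) ih) k
  exact not_strictAnti_of_wellFoundedLT (m ∘ f)
    (strictAnti_nat_of_succ_lt fun k => hm (hf k) (hPf k))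

def facWeight : ℕ → ℕ
  | 0 => 4
  | n + 1 => 3 * (n + 1) * facWeight n + 1

lemma four_le_facWeight (n : ℕ) : 4 ≤ facWeight n := by
  induction n with
  | zero => rfl
  | succ n ih => simp only [facWeight]; nlinarith

lemma facWeight_strictMono : StrictMono facWeight :=
  strictMono_nat_of_lt_succ fun n => by
    have := four_le_facWeight n
    simp only [facWeight]; nlinarith

def weight : FT → ℕ
  | zero => 2
  | s x => weight x + 1
  | neg _ => 0
  | fac x => facWeight (weight x)
  | mul x y => 3 * weight x * weight y
  | add x y => weight x + 2 * weight y

def NegFree : FT → Prop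
  | zero => True
  | s x => NegFree x
  | neg _ => False
  | fac x => NegFree x
  | mul x y => NegFree x ∧ NegFree y
  | add x y => NegFree x ∧ NegFree y

lemma NegFree.two_le_weight : ∀ {t : FT}, NegFree t → 2 ≤ weight t
  | zero, _ => le_rfl
  | s x, h => Nat.le_succ_of_le (two_le_weight (t := x) h)
  | neg _, h => h.elim
  | fac _, _ => le_trans (by norm_num) (four_le_facWeight _)
  | mul _ _, ⟨hx, hy⟩ => by
    have := hx.two_le_weight; have := hy.two_le_weight; simp only [weight]; nlinarith
  | add _ _, ⟨hx, _⟩ => by have := hx.two_le_weight; simp only [weight]; omega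

lemma negFree_sn (n : ℕ) : NegFree (sn n) := by
  induction n <;> simp_all [sn, NegFree]

lemma FRw.negFree {t u : FT} (h : FRw t u) (ht : NegFree t) : NegFree u := by
  induction h <;> simp_all [NegFree]

lemma FRw.weight_lt {t u : FT} (h : FRw t u) (ht : NegFree t) : weight u < weight t := by
  induction h with
  | fac0 => simp [weight, facWeight]
  | facs x =>
    have := four_le_facWeight (weight x)
    simp only [weight, facWeight]; nlinarith
  | mul0r x => have := ht.1.two_le_weight; simp only [weight]; nlinarith
  | mul0l y => have := ht.2.two_le_weight; simp only [weight]; nlinarith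
  | muls x y => have := ht.1.two_le_weight; simp only [weight]; nlinarith
  | add0r | s_c | add_l | add_r => simp_all [NegFree, weight]
  | add0l y => have := ht.2.two_le_weight; simp only [weight]; omega
  | adds x y => simp only [weight]; omega
  | fac_c _ ih => exact facWeight_strictMono (ih ht)
  | mul_l w _ ih =>
    have := ht.2.two_le_weight; have := ih ht.1; simp only [weight]; nlinarith
  | mul_r w _ ih =>
    have := ht.1.two_le_weight; have := ih ht.2; simp only [weight]; nlinarith
  | facm | mulsm | mulmm | addsm | addsm0 | addmm | neg_c => simp [NegFree] at ht

/-- The factorial TRS is terminating on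
`T = {fac(sⁿ(0)) : n ∈ ℕ}`. -/
theorem factorial_TRS_terminating_on_naturals :
    ∀ n : ℕ, ¬ ∃ f : ℕ → FT, f 0 = fac (sn n) ∧
      ∀ k : ℕ, FRw (f k) (f (k + 1)) := fun n =>
  not_exists_chain_of_invariant_of_measure_lt (P := NegFree) weight FRw.negFree FRw.weight_lt
    (a := fac (sn n)) (negFree_sn n)

end Fac
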